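/- With 𝕃 as in the n=2 first Stäckel representation and 𝕌₁ = [[0,1],[λ−2q₁,0]], the Lax equation d𝕃/dt₁ = [𝕌₁,𝕃] (entrywise polynomial identity in λ) is equivalent to the Hamiltonian equations q̇₁=2p₂, q̇₂=2p₁+2q₁p₂, ṗ₁=−p₂²+4q₁³−6q₁q₂−c, ṗ₂=2q₂−3q₁². -/

import Mathlib

/-! Along a curve `(q₁, q₂, p₁, p₂)` with velocity `(q₁', q₂', p₁', p₂')`, the `(0,0)` and `(0,1)`
entries of the Lax equation `𝕃̇ = [𝕌₁, 𝕃]` are identities between polynomials of degree one in `λ`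
whose coefficients are exactly Hamilton's equations, and these in turn imply the other two entries. -/

open Matrix

/-- Lax matrix of the first Stäckel representation of the n=2 stationary KdV system. -/
noncomputable def Lax (c q1 q2 p1 p2 lam : ℝ) : Matrix (Fin 2) (Fin 2) ℝ :=
  !![-p2*lam - p1 - q1*p2, lam^2 + q1*lam + q2;
     lam^3 - q1*lam^2 + (q1^2 - q2)*lam - p2^2 - q1^3 + 2*q1*q2 + c,
     -(-p2*lam - p1 - q1*p2)]

/-- First generating matrix 𝕌₁. -/
noncomputable def U1 (q1 lam : ℝ) : Matrix (Fin 2) (Fin 2) ℝ :=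
  !![0, 1; lam - 2*q1, 0]

/-- The time derivative of `Lax` along a curve with velocity `(q₁', q₂', p₁', p₂')`. -/
def laxDeriv (q1 q2 p2 q1' q2' p1' p2' lam : ℝ) : Matrix (Fin 2) (Fin 2) ℝ :=
  !![-p2'*lam - p1' - q1'*p2 - q1*p2', q1'*lam + q2';
     -q1'*lam^2 + (2*q1*q1' - q2')*lam - 2*p2*p2' - 3*q1^2*q1' + 2*q1'*q2 + 2*q1*q2',
     p2'*lam + p1' + q1'*p2 + q1*p2']

theorem hasDerivAt_Lax_apply (c lam : ℝ) {q1 q2 p1 p2 : ℝ → ℝ} {q1' q2' p1' p2' t : ℝ}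
    (hq1 : HasDerivAt q1 q1' t) (hq2 : HasDerivAt q2 q2' t)
    (hp1 : HasDerivAt p1 p1' t) (hp2 : HasDerivAt p2 p2' t) (i j : Fin 2) :
    HasDerivAt (fun s => Lax c (q1 s) (q2 s) (p1 s) (p2 s) lam i j)
      (laxDeriv (q1 t) (q2 t) (p2 t) q1' q2' p1' p2' lam i j) t := by
  have h00 := ((hp2.neg.mul_const lam).sub hp1).sub (hq1.mul hp2)
  fin_cases i <;> fin_cases j <;> simp only [Lax, laxDeriv, Fin.zero_eta, Fin.mk_one, of_apply,
    cons_val_zero, cons_val_one, cons_val', empty_val', cons_val_fin_one]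
  · exact h00.congr_deriv (by ring)
  · exact (((hq1.mul_const lam).const_add (lam ^ 2)).add hq2).congr_deriv (by ring)
  · exact (((((((hq1.mul_const (lam ^ 2)).const_sub (lam ^ 3)).add
      (((hq1.pow 2).sub hq2).mul_const lam)).sub (hp2.pow 2)).sub (hq1.pow 3)).add
      ((hq1.const_mul 2).mul hq2)).add_const c).congr_deriv (by push_cast; ring)
  · exact h00.neg.congr_deriv (by ring)

theorem U1_mul_Lax_sub_Lax_mul_U1 (c q1 q2 p1 p2 lam : ℝ) :
    U1 q1 lam * Lax c q1 q2 p1 p2 lam - Lax c q1 q2 p1 p2 lam * U1 q1 lam =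
      !![(3*q1^2 - 2*q2)*lam - p2^2 - q1^3 + 4*q1*q2 + c, 2*(p2*lam + p1 + q1*p2);
         -2*(lam - 2*q1)*(p2*lam + p1 + q1*p2),
         -((3*q1^2 - 2*q2)*lam - p2^2 - q1^3 + 4*q1*q2 + c)] := by
  rw [U1, Lax, mul_fin_two, mul_fin_two]
  ext i j
  fin_cases i <;> fin_cases j <;> simp only [Matrix.sub_apply, of_apply, Fin.zero_eta, Fin.mk_one,
    cons_val_zero, cons_val_one, cons_val', empty_val', cons_val_fin_one] <;> ring

theorem laxDeriv_eq_commutator_iff (c q1 q2 p1 p2 q1' q2' p1' p2' : ℝ) :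
    (∀ lam, laxDeriv q1 q2 p2 q1' q2' p1' p2' lam =
        U1 q1 lam * Lax c q1 q2 p1 p2 lam - Lax c q1 q2 p1 p2 lam * U1 q1 lam) ↔
      (q1' = 2 * p2 ∧ q2' = 2 * p1 + 2 * q1 * p2 ∧
        p1' = -p2^2 + 4*q1^3 - 6*q1*q2 - c ∧ p2' = 2 * q2 - 3*q1^2) := by
  simp only [U1_mul_Lax_sub_Lax_mul_U1, laxDeriv, ← Matrix.ext_iff, Fin.forall_fin_two,
    of_apply, cons_val_zero, cons_val_one, cons_val', empty_val', cons_val_fin_one]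
  constructor
  · intro h
    obtain ⟨⟨h00_0, h01_0⟩, -⟩ := h 0
    obtain ⟨⟨h00_1, h01_1⟩, -⟩ := h 1
    have hq1 : q1' = 2 * p2 := by linarith
    have hp2 : p2' = 2 * q2 - 3*q1^2 := by linarith
    refine ⟨hq1, by linarith, ?_, hp2⟩
    linear_combination -h00_0 - p2 * hq1 - q1 * hp2
  · rintro ⟨rfl, rfl, rfl, rfl⟩ lam
    refine ⟨⟨?_, ?_⟩, ?_, ?_⟩ <;> ring

theorem stmt4 (c : ℝ) (q1 q2 p1 p2 : ℝ → ℝ)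
    (hq1 : Differentiable ℝ q1) (hq2 : Differentiable ℝ q2)
    (hp1 : Differentiable ℝ p1) (hp2 : Differentiable ℝ p2) (t : ℝ) :
    (∀ lam : ℝ, ∀ i j : Fin 2,
        deriv (fun s => Lax c (q1 s) (q2 s) (p1 s) (p2 s) lam i j) t
          = (U1 (q1 t) lam * Lax c (q1 t) (q2 t) (p1 t) (p2 t) lam
             - Lax c (q1 t) (q2 t) (p1 t) (p2 t) lam * U1 (q1 t) lam) i j) ↔
    (deriv q1 t = 2 * p2 t ∧
     deriv q2 t = 2 * p1 t + 2 * q1 t * p2 t ∧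
     deriv p1 t = -(p2 t)^2 + 4*(q1 t)^3 - 6*(q1 t)*(q2 t) - c ∧
     deriv p2 t = 2 * q2 t - 3*(q1 t)^2) := by
  have hL lam i j := (hasDerivAt_Lax_apply c lam (hq1 t).hasDerivAt (hq2 t).hasDerivAt
    (hp1 t).hasDerivAt (hp2 t).hasDerivAt i j).deriv
  simp only [hL, Matrix.ext_iff]
  exact laxDeriv_eq_commutator_iff ..
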